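/- Matrix content of Corollary 3 (DFT implementability): for N = 2^L with L ≥ 1, there exist a natural number L' ≥ 1, permutation matrices P_0,…,P_{L'} ∈ {0,1}^{N×N}, and block diagonal matrices D_1,…,D_{L'} ∈ ℂ^{N×N}, each of the form diag(D_{ℓ,1},…,D_{ℓ,C_ℓ}, e^{iθ_{ℓ,1}},…,e^{iθ_{ℓ,S_ℓ}}) with 2C_ℓ + S_ℓ = N and 2×2 blocks D_{ℓ,c} = (1/√2)·[[e^{iθ_{ℓ,c,11}}, e^{iθ_{ℓ,c,12}}],[e^{iθ_{ℓ,c,21}}, e^{iθ_{ℓ,c,22}}]] satisfying θ_{ℓ,c,22} = π − θ_{ℓ,c,11} + θ_{ℓ,c,12} + θ_{ℓ,c,21}, such that F_N = P_{L'}·D_{L'}·⋯·P_1·D_1·P_0. Moreover this holds with L' = L, all C_ℓ = N/2, all S_ℓ = 0, and phases θ_{ℓ,c,11} = θ_{ℓ,c,21} = 0, θ_{ℓ,c,12} = −2π((c−1) mod 2^{ℓ−1})/2^ℓ. -/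

import Mathlib

open Matrix Complex

/-- Cast a square matrix along an equality of sizes. -/
noncomputable def castM {m n : ℕ} (h : m = n) (A : Matrix (Fin m) (Fin m) ℂ) :
    Matrix (Fin n) (Fin n) ℂ :=
  Matrix.reindex (finCongr h) (finCongr h) A

/-- The block diagonal matrix
`diag(D_1, …, D_C, e^{iφ_1}, …, e^{iφ_S})` where
`D_c = (1/√2)·[[e^{iθ11(c)}, e^{iθ12(c)}],[e^{iθ21(c)}, e^{i(π − θ11(c) + θ12(c) + θ21(c))}]]`. -/
noncomputable def layerMatrix (C S : ℕ) (θ11 θ12 θ21 : Fin C → ℝ) (φ : Fin S → ℝ) :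
    Matrix (Fin (2 * C + S)) (Fin (2 * C + S)) ℂ :=
  Matrix.of fun i k =>
    if hi : i.val < 2 * C then
      if hk : k.val < 2 * C then
        if i.val / 2 = k.val / 2 then
          (1 / (Real.sqrt 2 : ℂ)) * Complex.exp (Complex.I *
            (((if i.val % 2 = 0 then
                  (if k.val % 2 = 0 then θ11 ⟨i.val / 2, by omega⟩
                   else θ12 ⟨i.val / 2, by omega⟩)
                else
                  (if k.val % 2 = 0 then θ21 ⟨i.val / 2, by omega⟩
                   else Real.pi - θ11 ⟨i.val / 2, by omega⟩ + θ12 ⟨i.val / 2, by omega⟩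
                        + θ21 ⟨i.val / 2, by omega⟩)) : ℝ) : ℂ))
        else 0
      else 0
    else if i = k then
      Complex.exp (Complex.I * ((φ ⟨i.val - 2 * C, by have := i.isLt; omega⟩ : ℝ) : ℂ))
    else 0

/-- A matrix is a permutation matrix if it is the 0/1 matrix of some permutation. -/
def IsPermutationMatrix {n : ℕ} (A : Matrix (Fin n) (Fin n) ℂ) : Prop :=
  ∃ σ : Equiv.Perm (Fin n), ∀ i k, A i k = if σ i = k then 1 else 0

/-- An `N×N` matrix has the layer form of Theorem 1: it is block diagonal
`diag(D_{1},…,D_{C}, e^{iθ_1},…,e^{iθ_S})` with `2C + S = N`, where each 2×2 block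
`D_c = (1/√2)·[[e^{iθ11}, e^{iθ12}],[e^{iθ21}, e^{iθ22}]]` satisfies
`θ22 = π − θ11 + θ12 + θ21`. -/
def LayerForm {N : ℕ} (Dm : Matrix (Fin N) (Fin N) ℂ) : Prop :=
  ∃ (C S : ℕ) (hCS : 2 * C + S = N) (θ11 θ12 θ21 : Fin C → ℝ) (φ : Fin S → ℝ),
    Dm = castM hCS (layerMatrix C S θ11 θ12 θ21 φ)

/-- The N×N DFT matrix, `[F_N]_{i,k} = e^{-2πi·i·k/N}/√N` (0-based indices). -/
noncomputable def dftMatrix (N : ℕ) : Matrix (Fin N) (Fin N) ℂ :=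
  Matrix.of fun i k =>
    Complex.exp (-(2 * Real.pi * Complex.I) * ((i.val : ℂ) * (k.val : ℂ)) / (N : ℂ))
      / (Real.sqrt N : ℂ)

/-!
Radix-2 Cooley–Tukey. Splitting rows as `j + M a` and columns as `2k + b` gives
`ω_{2M}^{(j + Ma)(2k + b)} = (-1)^{ab} ω_{2M}^{jb} ω_M^{jk}`, i.e.
`F_{2M} = P B P⁻¹ diag(F_M, F_M) P` with `P` the interleaving `j + Ma ↦ 2j + a` and `B` a layer of
2×2 butterflies with twiddle phases `-2πj/(2M)`. Unrolling this recursion for `N = 2^L` gives `L`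
butterfly layers separated by permutations. The lower layers survive the doubling
`A ↦ diag(A, A)` unchanged because the phases of layer `ι` depend on the block index only
modulo `2^ι`.
-/

open Equiv Real

namespace Matrix

variable {n n' R : Type*} [Fintype n] [DecidableEq n] [Fintype n'] [DecidableEq n'] [Semiring R]

/-- `IsPermChain D M` says `M = P_k * D (k-1) * P_{k-1} * ⋯ * P_1 * D 0 * P_0` for some
permutation matrices `P_i`. -/
def IsPermChain : {k : ℕ} → (Fin k → Matrix n n R) → Matrix n n R → Prop
  | 0, _, M => ∃ σ : Perm n, M = σ.permMatrix R
  | k + 1, D, M => ∃ (σ : Perm n) (M' : Matrix n n R),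
      IsPermChain (fun i => D i.castSucc) M' ∧ M = σ.permMatrix R * D (Fin.last k) * M'

variable {k : ℕ} {D : Fin k → Matrix n n R} {M : Matrix n n R}

theorem IsPermChain.permMatrix_mul (h : IsPermChain D M) (τ : Perm n) :
    IsPermChain D (τ.permMatrix R * M) := by
  cases k with
  | zero =>
    obtain ⟨σ, rfl⟩ := h
    exact ⟨σ * τ, (Matrix.permMatrix_mul σ τ).symm⟩
  | succ k =>
    obtain ⟨σ, M', hM', rfl⟩ := h
    exact ⟨σ * τ, M', hM', by simp only [Matrix.permMatrix_mul, Matrix.mul_assoc]⟩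

theorem IsPermChain.mul_permMatrix (h : IsPermChain D M) (τ : Perm n) :
    IsPermChain D (M * τ.permMatrix R) := by
  induction k generalizing M with
  | zero =>
    obtain ⟨σ, rfl⟩ := h
    exact ⟨τ * σ, (Matrix.permMatrix_mul τ σ).symm⟩
  | succ k ih =>
    obtain ⟨σ, M', hM', rfl⟩ := h
    exact ⟨σ, M' * τ.permMatrix R, ih hM', by rw [Matrix.mul_assoc]⟩

theorem IsPermChain.map (h : IsPermChain D M) (f : Matrix n n R →* Matrix n' n' R)
    (hf : ∀ σ : Perm n, ∃ τ : Perm n', f (σ.permMatrix R) = τ.permMatrix R) :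
    IsPermChain (fun i => f (D i)) (f M) := by
  induction k generalizing M with
  | zero =>
    obtain ⟨σ, rfl⟩ := h
    exact hf σ
  | succ k ih =>
    obtain ⟨σ, M', hM', rfl⟩ := h
    obtain ⟨τ, hτ⟩ := hf σ
    exact ⟨τ, f M', ih hM', by rw [map_mul, map_mul, hτ]⟩

theorem IsPermChain.exists_eq_prod (h : IsPermChain D M) :
    ∃ σ : Fin (k + 1) → Perm n,
      M = ((List.finRange k).reverse.map fun i => (σ i.succ).permMatrix R * D i).prod *
        (σ 0).permMatrix R := by
  induction k generalizing M with
  | zero =>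
    obtain ⟨σ, rfl⟩ := h
    exact ⟨fun _ => σ, by simp⟩
  | succ k ih =>
    obtain ⟨σ, M', hM', rfl⟩ := h
    obtain ⟨τ, rfl⟩ := ih hM'
    refine ⟨Fin.snoc τ σ, ?_⟩
    rw [List.finRange_succ_last]
    simp [Matrix.mul_assoc, Function.comp_def, Fin.succ_castSucc, -Fin.castSucc_succ]

end Matrix

theorem isPermutationMatrix_permMatrix {n : ℕ} (σ : Perm (Fin n)) :
    IsPermutationMatrix (σ.permMatrix ℂ) :=
  ⟨σ, fun i k => by simp [PEquiv.toMatrix_apply]⟩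

section Halves

variable {M N : ℕ}

def finHalvesEquiv (h : N = 2 * M) : Fin M × Fin 2 ≃ Fin N :=
  ((Equiv.prodComm _ _).trans finProdFinEquiv).trans (finCongr h.symm)

def finPairsEquiv (h : N = 2 * M) : Fin M × Fin 2 ≃ Fin N :=
  finProdFinEquiv.trans (finCongr (h.trans (mul_comm 2 M)).symm)

@[simp]
theorem finHalvesEquiv_val (h : N = 2 * M) (p : Fin M × Fin 2) :
    (finHalvesEquiv h p : ℕ) = p.1 + M * p.2 := by
  simp [finHalvesEquiv]

@[simp]
theorem finPairsEquiv_val (h : N = 2 * M) (p : Fin M × Fin 2) :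
    (finPairsEquiv h p : ℕ) = 2 * p.1 + p.2 := by
  simp [finPairsEquiv, add_comm]

def finInterleave (h : N = 2 * M) : Perm (Fin N) :=
  (finHalvesEquiv h).symm.trans (finPairsEquiv h)

variable (R : Type*) [Semiring R]

noncomputable def doubleDiag (h : N = 2 * M) :
    Matrix (Fin M) (Fin M) R →+* Matrix (Fin N) (Fin N) R :=
  (reindexRingEquiv R (finHalvesEquiv h)).toRingHom.comp
    ((blockDiagonalRingHom (Fin M) (Fin 2) R).comp (Pi.constRingHom (Fin 2) _))

variable {R}

theorem doubleDiag_apply_finHalvesEquiv (h : N = 2 * M) (A : Matrix (Fin M) (Fin M) R)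
    (p q : Fin M × Fin 2) :
    doubleDiag R h A (finHalvesEquiv h p) (finHalvesEquiv h q) =
      if p.2 = q.2 then A p.1 q.1 else 0 := by
  simp [doubleDiag, blockDiagonal_apply]

theorem doubleDiag_permMatrix (h : N = 2 * M) (σ : Perm (Fin M)) :
    doubleDiag R h (σ.permMatrix R) =
      ((finHalvesEquiv h).permCongr (σ.prodCongr (Equiv.refl _))).permMatrix R := by
  ext x y
  obtain ⟨p, rfl⟩ := (finHalvesEquiv h).surjective x
  obtain ⟨q, rfl⟩ := (finHalvesEquiv h).surjective y
  simp [doubleDiag, blockDiagonal_apply, Equiv.permCongr_apply, Prod.ext_iff, ite_and, and_comm]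

end Halves

section Butterfly

variable {M N : ℕ}

/-- Entry `(a, b)` of the block `[[1, e^{iθ}], [1, -e^{iθ}]] / √2`. -/
noncomputable def butterflyCoeff (θ : ℝ) (a b : ℕ) : ℂ :=
  Complex.exp (I * ((θ * b + π * a * b : ℝ) : ℂ)) / (Real.sqrt 2 : ℂ)

noncomputable def butterflyMatrix (N : ℕ) (ψ : ℕ → ℝ) : Matrix (Fin N) (Fin N) ℂ :=
  of fun x y => if (x : ℕ) / 2 = y / 2 then butterflyCoeff (ψ (x / 2)) (x % 2) (y % 2) else 0

theorem butterflyMatrix_apply_finPairsEquiv (h : N = 2 * M) (ψ : ℕ → ℝ) (p q : Fin M × Fin 2) :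
    butterflyMatrix N ψ (finPairsEquiv h p) (finPairsEquiv h q) =
      if p.1 = q.1 then butterflyCoeff (ψ p.1) p.2 q.2 else 0 := by
  have hp := p.2.isLt
  have hq := q.2.isLt
  simp only [butterflyMatrix, of_apply, finPairsEquiv_val, Fin.ext_iff]
  rw [show (2 * p.1 + p.2 : ℕ) / 2 = p.1 by omega, show (2 * q.1 + q.2 : ℕ) / 2 = q.1 by omega,
    show (2 * p.1 + p.2 : ℕ) % 2 = p.2 by omega, show (2 * q.1 + q.2 : ℕ) % 2 = q.2 by omega]

theorem layerMatrix_eq_butterflyMatrix (C : ℕ) (ψ : ℕ → ℝ) (φ : Fin 0 → ℝ) :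
    layerMatrix C 0 (fun _ => 0) (fun c => ψ c) (fun _ => 0) φ = butterflyMatrix (2 * C) ψ := by
  ext x y
  have hx : (x : ℕ) < 2 * C := x.isLt
  have hy : (y : ℕ) < 2 * C := y.isLt
  simp only [layerMatrix, butterflyMatrix, butterflyCoeff, of_apply, dif_pos hx, dif_pos hy]
  congr 1
  rcases Nat.mod_two_eq_zero_or_one x with hx2 | hx2 <;>
    rcases Nat.mod_two_eq_zero_or_one y with hy2 | hy2 <;>
    simp [hx2, hy2, div_eq_inv_mul, add_comm]

theorem castM_butterflyMatrix (h : M = N) (ψ : ℕ → ℝ) :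
    castM h (butterflyMatrix M ψ) = butterflyMatrix N ψ := by
  subst h
  simp [castM]

theorem doubleDiag_butterflyMatrix {C : ℕ} (h : N = 2 * M) (hM : M = 2 * C) {ψ : ℕ → ℝ}
    (hψ : Function.Periodic ψ C) :
    doubleDiag ℂ h (butterflyMatrix M ψ) = butterflyMatrix N ψ := by
  ext x y
  obtain ⟨⟨j, a⟩, rfl⟩ := (finHalvesEquiv h).surjective x
  obtain ⟨⟨k, b⟩, rfl⟩ := (finHalvesEquiv h).surjective y
  have hj : (j : ℕ) / 2 < C := by omega
  have hk : (k : ℕ) / 2 < C := by omega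
  subst hM
  rw [doubleDiag_apply_finHalvesEquiv]
  simp only [butterflyMatrix, of_apply, finHalvesEquiv_val]
  fin_cases a <;> fin_cases b <;>
    simp [Nat.add_mul_div_left _ _ two_pos, Nat.add_mul_mod_self_left, hψ _] <;> omega

theorem dftMatrix_finHalvesEquiv_finPairsEquiv (h : N = 2 * M) (p q : Fin M × Fin 2) :
    dftMatrix N (finHalvesEquiv h p) (finPairsEquiv h q) =
      butterflyCoeff (-(2 * π) * p.1 / N) p.2 q.2 * dftMatrix M p.1 q.1 := by
  have hM : (M : ℂ) ≠ 0 := Nat.cast_ne_zero.mpr p.1.pos.ne'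
  have hsqrt : (Real.sqrt N : ℂ) = Real.sqrt 2 * Real.sqrt M := by
    rw [h, Nat.cast_mul, Real.sqrt_mul (by norm_num), Complex.ofReal_mul]
    norm_num
  simp only [dftMatrix, of_apply, butterflyCoeff, finHalvesEquiv_val, finPairsEquiv_val, hsqrt]
  rw [div_mul_div_comm, ← Complex.exp_add]
  congr 1
  rw [Complex.exp_eq_exp_iff_exists_int]
  refine ⟨-((p.2 * q.2 + p.2 * q.1 : ℕ) : ℤ), ?_⟩
  rw [h]
  push_cast
  field_simp
  ring

theorem dftMatrix_eq_permMatrix_mul (h : N = 2 * M) (ψ : ℕ → ℝ)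
    (hψ : ∀ j < M, ψ j = -(2 * π) * j / N) :
    dftMatrix N = (finInterleave h).permMatrix ℂ * butterflyMatrix N ψ *
      ((finInterleave h)⁻¹.permMatrix ℂ * doubleDiag ℂ h (dftMatrix M) *
        (finInterleave h).permMatrix ℂ) := by
  ext x y
  obtain ⟨p, rfl⟩ := (finHalvesEquiv h).surjective x
  obtain ⟨q, rfl⟩ := (finPairsEquiv h).surjective y
  rw [dftMatrix_finHalvesEquiv_finPairsEquiv, ← hψ p.1 p.1.isLt, PEquiv.toMatrix_toPEquiv_mul,
    PEquiv.toMatrix_toPEquiv_mul, PEquiv.mul_toMatrix_toPEquiv, mul_apply,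
    ← (finPairsEquiv h).sum_comp]
  simp [finInterleave, butterflyMatrix_apply_finPairsEquiv, doubleDiag_apply_finHalvesEquiv,
    Fintype.sum_prod_type]

end Butterfly

noncomputable def fftPhase (ι c : ℕ) : ℝ := -(2 * π) * ((c % 2 ^ ι : ℕ) : ℝ) / 2 ^ (ι + 1)

noncomputable def fftLayer (L : ℕ) (ι : Fin L) : Matrix (Fin (2 ^ L)) (Fin (2 ^ L)) ℂ :=
  castM (by rw [add_zero, ← pow_succ', Nat.sub_add_cancel ι.pos])
    (layerMatrix (2 ^ (L - 1)) 0 (fun _ => 0) (fun c => fftPhase ι c) (fun _ => 0) (fun _ => 0))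

theorem fftPhase_periodic (ι : ℕ) : Function.Periodic (fftPhase ι) (2 ^ ι) := by
  intro c
  simp [fftPhase]

theorem fftPhase_of_lt {L j : ℕ} (hj : j < 2 ^ L) :
    fftPhase L j = -(2 * π) * j / (2 ^ (L + 1) : ℕ) := by
  rw [fftPhase, Nat.mod_eq_of_lt hj]
  push_cast
  ring

theorem fftLayer_eq_butterflyMatrix (L : ℕ) (ι : Fin L) :
    fftLayer L ι = butterflyMatrix (2 ^ L) (fftPhase ι) := by
  rw [fftLayer, layerMatrix_eq_butterflyMatrix]
  exact castM_butterflyMatrix _ _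

theorem fftLayer_castSucc (L : ℕ) (ι : Fin L) :
    fftLayer (L + 1) ι.castSucc = doubleDiag ℂ (pow_succ' 2 L) (fftLayer L ι) := by
  rw [fftLayer_eq_butterflyMatrix, fftLayer_eq_butterflyMatrix, Fin.val_castSucc,
    doubleDiag_butterflyMatrix (pow_succ' 2 L) (C := 2 ^ (L - 1))
      (by rw [← pow_succ', Nat.sub_add_cancel ι.pos])]
  have := (fftPhase_periodic ι).nat_mul (2 ^ (L - 1 - ι))
  rwa [Nat.cast_id, ← pow_add, Nat.sub_add_cancel (by omega)] at this

theorem fftLayer_last (L : ℕ) :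
    fftLayer (L + 1) (Fin.last L) = butterflyMatrix (2 ^ (L + 1)) (fftPhase L) := by
  rw [fftLayer_eq_butterflyMatrix, Fin.val_last]

theorem dftMatrix_one : dftMatrix 1 = 1 := by
  ext i j
  fin_cases i
  fin_cases j
  simp [dftMatrix]

theorem isPermChain_fftLayer_dftMatrix (L : ℕ) :
    IsPermChain (fftLayer L) (dftMatrix (2 ^ L)) := by
  induction L with
  | zero => exact ⟨1, dftMatrix_one.trans permMatrix_one.symm⟩
  | succ L ih =>
    have h := pow_succ' 2 L
    rw [dftMatrix_eq_permMatrix_mul h (fftPhase L) fun j hj => fftPhase_of_lt hj,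
      ← fftLayer_last]
    refine ⟨_, _, ?_, rfl⟩
    simp only [fftLayer_castSucc]
    exact ((ih.map (doubleDiag ℂ h).toMonoidHom fun σ => ⟨_, doubleDiag_permMatrix h σ⟩)
      |>.permMatrix_mul _).mul_permMatrix _

-- Layers and blocks are indexed from 0: block `c` of layer `i + 1` has
-- `θ12 = −2π (c mod 2^i) / 2^(i+1)`.
/-- **Matrix content of Corollary 3 (DFT implementability)**: for `N = 2^L`, `L ≥ 1`, the
DFT matrix has a decomposition `F_N = P_{L'}·D_{L'}·⋯·P_1·D_1·P_0` with permutation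
matrices `P_ℓ` and layer matrices `D_ℓ` as in Theorem 1; moreover this holds with `L' = L`,
all `C_ℓ = N/2`, `S_ℓ = 0`, and phases `θ_{ℓ,c,11} = θ_{ℓ,c,21} = 0`,
`θ_{ℓ,c,12} = −2π((c−1) mod 2^{ℓ−1})/2^ℓ` (0-based: block `c` of layer `ℓ = i+1` has
`θ12 = −2π(c mod 2^i)/2^{i+1}`). -/
theorem dft_implementable (L : ℕ) (hL : 1 ≤ L) :
    (∃ L' : ℕ, 1 ≤ L' ∧
      ∃ (P : Fin (L' + 1) → Matrix (Fin (2 ^ L)) (Fin (2 ^ L)) ℂ)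
        (D : Fin L' → Matrix (Fin (2 ^ L)) (Fin (2 ^ L)) ℂ),
        (∀ ℓ, IsPermutationMatrix (P ℓ)) ∧ (∀ ℓ, LayerForm (D ℓ)) ∧
        dftMatrix (2 ^ L) =
          ((List.finRange L').reverse.map fun i => P i.succ * D i).prod * P 0)
    ∧
    (∃ P : Fin (L + 1) → Matrix (Fin (2 ^ L)) (Fin (2 ^ L)) ℂ,
      (∀ ℓ, IsPermutationMatrix (P ℓ)) ∧
      dftMatrix (2 ^ L) =
        ((List.finRange L).reverse.map fun i : Fin L =>
            P i.succ *
              castM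
                (show 2 * 2 ^ (L - 1) + 0 = 2 ^ L by
                  rw [Nat.add_zero, ← pow_succ']
                  congr 1
                  omega)
                (layerMatrix (2 ^ (L - 1)) 0
                  (fun _ => 0)
                  (fun c => -(2 * Real.pi) * ((c.val % 2 ^ i.val : ℕ) : ℝ) / 2 ^ (i.val + 1))
                  (fun _ => 0)
                  (fun _ => 0))).prod
          * P 0) := by
  obtain ⟨σ, hσ⟩ := (isPermChain_fftLayer_dftMatrix L).exists_eq_prod
  have hP : ∀ ℓ, IsPermutationMatrix ((σ ℓ).permMatrix ℂ) :=
    fun ℓ => isPermutationMatrix_permMatrix _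
  exact ⟨⟨L, hL, _, fftLayer L, hP, fun ℓ => ⟨_, _, _, _, _, _, _, rfl⟩, hσ⟩, _, hP, hσ⟩
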